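/- Let G be a graph on n vertices, and suppose there are at least m vertices v such that α(G \ {v}) = α(G). Then α(G) ≤ ⌊n − m/2⌋. -/

import Mathlib

/-!
Fix a maximum independent set `I`, so `α = #I`. The removable vertices outside `I` number at most
`n - α`. A vertex `v` is removable exactly when some maximum independent set avoids it, and for
independent sets of such vertices an exchange argument gives Hall's condition `#A ≤ #N(A)`: if the
maximum independent set `K` avoids `a ∈ A`, then swapping `A \ K` into `K` in place of
`K ∩ N(A \ K)` shows `#(A \ K) ≤ #(K ∩ N(A))`, while `N(A ∩ K)` misses `K` and induction applies
to the smaller set `A ∩ K`. Since `N(A) ⊆ Iᶜ` for `A ⊆ I`, the removable vertices inside `I` also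
number at most `n - α`.
-/

open SimpleGraph Set

/-- The independence number of `G` restricted to a vertex subset `A`:
the largest cardinality of a finite set of vertices inside `A` that is
pairwise non-adjacent in `G`. -/
noncomputable def indepNumOn {V : Type*} (G : SimpleGraph V) (A : Set V) : ℕ :=
  sSup {n | ∃ s : Finset V, ↑s ⊆ A ∧ s.card = n ∧
    ∀ x ∈ s, ∀ y ∈ s, x ≠ y → ¬ G.Adj x y}

/-- The independence number of `G`. -/
noncomputable def indepNum {V : Type*} (G : SimpleGraph V) : ℕ :=
  indepNumOn G Set.univ

/-- `G` is `(k, l)`-stable: removing any `k` vertices decreases the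
independence number by at most `l`. -/
def IsStable {V : Type*} (G : SimpleGraph V) (k l : ℕ) : Prop :=
  ∀ S : Finset V, S.card = k → _root_.indepNum G ≤ indepNumOn G (↑S : Set V)ᶜ + l

namespace SimpleGraph

open Finset

variable {V : Type*} {G : SimpleGraph V} [Finite V]

lemma IsMaximumIndepSet.card_le_card_inter_of_disjoint [DecidableEq V] {K D B : Finset V}
    (hK : G.IsMaximumIndepSet K) (hD : G.IsIndepSet D) (hDK : Disjoint D K)
    (hB : ∀ x ∈ D, ∀ y, G.Adj x y → y ∈ B) : #D ≤ #(K ∩ B) := by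
  have hT : G.IsIndepSet ↑(K \ B ∪ D) := by
    rw [coe_union, isIndepSet_iff, Set.pairwise_union]
    refine ⟨hK.isIndepSet.mono (by simp), hD, fun y hy x hx _ => ⟨fun hyx => ?_, fun hxy => ?_⟩⟩
    · exact (mem_sdiff.mp hy).2 (hB x hx y hyx.symm)
    · exact (mem_sdiff.mp hy).2 (hB x hx y hxy)
  have hcard := hK.maximum _ hT
  rw [card_union_of_disjoint (hDK.symm.mono_left sdiff_subset)] at hcard
  have := card_sdiff_add_card_inter K B
  omega

lemma IsIndepSet.card_le_of_forall_exists_notMem {A B : Finset V} (hA : G.IsIndepSet A)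
    (havoid : ∀ a ∈ A, ∃ K, G.IsMaximumIndepSet K ∧ a ∉ K)
    (hB : ∀ x ∈ A, ∀ y, G.Adj x y → y ∈ B) : #A ≤ #B := by
  classical
  induction A using Finset.strongInduction generalizing B with
  | H A ih =>
  rcases A.eq_empty_or_nonempty with rfl | ⟨a, ha⟩
  · simp
  obtain ⟨K, hK, haK⟩ := havoid a ha
  have hinK : #(A ∩ K) ≤ #(B \ K) := by
    refine ih _ (Finset.ssubset_iff_subset_ne.mpr ⟨inter_subset_left, ?_⟩)
      (hA.mono (by simp)) (fun x hx => havoid x (mem_of_mem_inter_left hx)) ?_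
    · exact fun h => haK (Finset.mem_of_mem_inter_right (h ▸ ha))
    intro x hx y hxy
    refine mem_sdiff.mpr ⟨hB x (mem_of_mem_inter_left hx) y hxy, fun hyK => ?_⟩
    exact hK.isIndepSet (mem_of_mem_inter_right hx) hyK (G.ne_of_adj hxy) hxy
  have houtK : #(A \ K) ≤ #(K ∩ B) :=
    hK.card_le_card_inter_of_disjoint (hA.mono (by simp)) sdiff_disjoint
      (fun x hx => hB x (mem_sdiff.mp hx).1)
  have := card_sdiff_add_card_inter A K
  have := card_sdiff_add_card_inter B K
  rw [Finset.inter_comm] at houtK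
  omega

end SimpleGraph

section indepNumOn

open Finset

variable {V : Type*} [Finite V] (G : SimpleGraph V)

lemma bddAbove_setOf_card_isIndepSet (A : Set V) :
    BddAbove {n | ∃ s : Finset V, ↑s ⊆ A ∧ #s = n ∧ ∀ x ∈ s, ∀ y ∈ s, x ≠ y → ¬ G.Adj x y} := by
  have := Fintype.ofFinite V
  exact ⟨Fintype.card V, by rintro _ ⟨s, -, rfl, -⟩; exact card_le_univ s⟩

lemma exists_isIndepSet_card_eq_indepNumOn (A : Set V) :
    ∃ s : Finset V, ↑s ⊆ A ∧ G.IsIndepSet s ∧ #s = indepNumOn G A := by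
  obtain ⟨s, hsA, hs, hind⟩ :=
    Nat.sSup_mem (by exact ⟨0, ∅, by simp, rfl, by simp⟩) (bddAbove_setOf_card_isIndepSet G A)
  exact ⟨s, hsA, fun _ hx _ hy => hind _ hx _ hy, hs⟩

variable {G} in
lemma SimpleGraph.IsIndepSet.card_le_indepNumOn {A : Set V} {s : Finset V} (hs : G.IsIndepSet s)
    (hsA : ↑s ⊆ A) : #s ≤ indepNumOn G A :=
  le_csSup (bddAbove_setOf_card_isIndepSet G A) ⟨s, hsA, rfl, fun _ hx _ hy => hs hx hy⟩

lemma indepNum_eq_indepNum : _root_.indepNum G = G.indepNum := by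
  obtain ⟨s, -, hs, hcard⟩ := exists_isIndepSet_card_eq_indepNumOn G Set.univ
  obtain ⟨t, ht, htcard⟩ := G.exists_isNIndepSet_indepNum
  refine le_antisymm ?_ (htcard ▸ ht.card_le_indepNumOn (by simp))
  rw [_root_.indepNum, ← hcard]
  exact hs.card_le_indepNum

lemma exists_isMaximumIndepSet_notMem {v : V}
    (hv : indepNumOn G ({v} : Set V)ᶜ = _root_.indepNum G) :
    ∃ K, G.IsMaximumIndepSet K ∧ v ∉ K := by
  obtain ⟨K, hKv, hK, hcard⟩ := exists_isIndepSet_card_eq_indepNumOn G ({v} : Set V)ᶜ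
  refine ⟨K, ⟨hK, fun t ht => ?_⟩, fun hvK => hKv hvK rfl⟩
  rw [hcard, hv, indepNum_eq_indepNum]
  exact ht.card_le_indepNum

end indepNumOn

open Finset in
lemma ncard_setOf_indepNumOn_compl_singleton_add_le {V : Type*} [Fintype V] (G : SimpleGraph V) :
    {v : V | indepNumOn G ({v} : Set V)ᶜ = _root_.indepNum G}.ncard + 2 * _root_.indepNum G ≤
      2 * Fintype.card V := by
  classical
  set S := {v : V | indepNumOn G ({v} : Set V)ᶜ = _root_.indepNum G}
  obtain ⟨I, hI⟩ := G.maximumIndepSet_exists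
  have hIcard : #I = _root_.indepNum G := by
    rw [indepNum_eq_indepNum, G.maximumIndepSet_card_eq_indepNum I hI]
  have hin : #(S.toFinset ∩ I) ≤ #Iᶜ := by
    have hSI : G.IsIndepSet ↑(S.toFinset ∩ I) := hI.isIndepSet.mono (by simp)
    refine hSI.card_le_of_forall_exists_notMem
      (fun a ha => exists_isMaximumIndepSet_notMem G ?_) fun x hx y hxy => mem_compl.mpr ?_
    · simpa [S] using (mem_inter.mp ha).1
    · exact fun hyI => hI.isIndepSet (mem_inter.mp hx).2 hyI (G.ne_of_adj hxy) hxy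
  have hout : #(S.toFinset \ I) ≤ #Iᶜ := card_le_card fun x hx => mem_compl.mpr (mem_sdiff.mp hx).2
  rw [Set.ncard_eq_toFinset_card', ← card_sdiff_add_card_inter S.toFinset I]
  rw [card_compl, hIcard] at hin hout
  have := hIcard ▸ card_le_univ I
  omega

theorem indepNum_le_of_many_removable {V : Type*} [Fintype V] (G : SimpleGraph V) (n m : ℕ)
    (hn : Fintype.card V = n)
    (hm : m ≤ {v : V | indepNumOn G ({v} : Set V)ᶜ = _root_.indepNum G}.ncard) :
    _root_.indepNum G ≤ n - (m + 1) / 2 := by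
  have := ncard_setOf_indepNumOn_compl_singleton_add_le G
  omega
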